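/- arXiv:2007.01897 — 2 statements merged into one kernel-verified Lean document; each statement's English description precedes it below -/
import Mathlib

section
/- Let G_s = (V, E_s) be a strongly connected directed graph, let u, w ∈ V with u ≠ w, and suppose (u,w) ∉ E_s. Then in the directed graph (V, E_s ∪ {(u,w)}) the vertices u and w lie in a common strongly biconnected component; that is, there is a vertex subset U ⊆ V with u, w ∈ U such that the induced subgraph of (V, E_s ∪ {(u,w)}) on U is strongly biconnected. -/
/-- A directed graph (on vertex type `V`, with edge relation `E`) is strongly connected if
every vertex can reach every other vertex by a directed path. -/
def StronglyConnected {V : Type*} (E : V → V → Prop) : Prop :=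
  ∀ u v : V, Relation.ReflTransGen E u v

/-- The underlying simple undirected graph of a directed graph: `u` and `v` are adjacent
iff `u ≠ v` and there is a directed edge between them in some direction. -/
def underlyingGraph {V : Type*} (E : V → V → Prop) : SimpleGraph V where
  Adj u v := u ≠ v ∧ (E u v ∨ E v u)
  symm := ⟨fun u v ⟨h1, h2⟩ => ⟨h1.symm, h2.symm⟩⟩
  loopless := ⟨fun _ h => h.1 rfl⟩

/-- `w` is an articulation point of the undirected graph `G` if removing `w`
disconnects the graph. -/
def IsArticulationPoint {V : Type*} (G : SimpleGraph V) (w : V) : Prop :=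
  ¬ (G.induce {v : V | v ≠ w}).Preconnected

/-- An undirected graph is biconnected if it is connected and has no articulation point. -/
def Biconnected {V : Type*} (G : SimpleGraph V) : Prop :=
  G.Connected ∧ ∀ w : V, ¬ IsArticulationPoint G w

/-- A directed graph is strongly biconnected if it is strongly connected and its
underlying undirected graph is biconnected. -/
def StronglyBiconnected {V : Type*} (E : V → V → Prop) : Prop :=
  StronglyConnected E ∧ Biconnected (underlyingGraph E)


/-!
Strong connectivity of `G_s` gives a simple directed path `w = v₀ → ⋯ → vₖ = u`, which the new
edge `(u, w)` closes into a directed cycle through `u` and `w`. The vertex set of a directed cycle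
is strongly biconnected: it is strongly connected, and deleting one vertex leaves a directed path
through all the others, so the underlying graph stays connected.

A cycle is encoded as a list `c` of distinct vertices with `(c ++ c).IsChain E`; every arc of the
cycle, in particular the path left after deleting a vertex, is then an infix of `c ++ c`.
-/

open Relation

theorem List.exists_isChain_cons_nodup_of_relationReflTransGen {α : Type*} {r : α → α → Prop}
    {a b : α} (h : ReflTransGen r a b) :
    ∃ l : List α,
      (a :: l).IsChain r ∧ (a :: l).getLast (cons_ne_nil a l) = b ∧ (a :: l).Nodup := by
  induction h using ReflTransGen.head_induction_on with
  | refl => exact ⟨[], .singleton _, rfl, nodup_singleton _⟩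
  | @head a c hac _ ih =>
    obtain ⟨l, hchain, hlast, hnodup⟩ := ih
    by_cases hmem : a ∈ c :: l
    · obtain ⟨s, t, hst⟩ := append_of_mem hmem
      have hsuf : a :: t <:+ c :: l := ⟨s, hst.symm⟩
      exact ⟨t, hchain.suffix hsuf, by simp [← hlast, hst], hnodup.sublist hsuf.sublist⟩
    · exact ⟨c :: l, hchain.cons_cons hac, by rwa [getLast_cons_cons],
        nodup_cons.mpr ⟨hmem, hnodup⟩⟩

theorem List.reflTransGen_of_isChain_append_self {α : Type*} {E : α → α → Prop} {c : List α}
    (hc : (c ++ c).IsChain E) {y z : α} (hy : y ∈ c) (hz : z ∈ c) : ReflTransGen E y z := by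
  obtain ⟨s, t, hy⟩ := append_of_mem hy
  obtain ⟨s', t', hz⟩ := append_of_mem hz
  have hsplit : c ++ c = s ++ (y :: (t ++ s') ++ [z]) ++ t' := by
    nth_rw 1 [hy]
    rw [hz]
    simp
  exact relationReflTransGen_of_exists_isChain_cons _ (hc.infix ⟨s, t', hsplit.symm⟩) (by simp)

theorem reachable_underlyingGraph_of_reflTransGen {V : Type*} {E : V → V → Prop} {a b : V}
    (h : ReflTransGen E a b) : (underlyingGraph E).Reachable a b := by
  induction h with
  | refl => rfl
  | @tail b c _ hbc ih =>
    obtain rfl | hne := eq_or_ne b c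
    · exact ih
    · exact ih.trans (SimpleGraph.Adj.reachable ⟨hne, .inl hbc⟩)

theorem StronglyConnected.connected_underlyingGraph {V : Type*} [Nonempty V] {E : V → V → Prop}
    (h : StronglyConnected E) : (underlyingGraph E).Connected :=
  .mk fun a b => reachable_underlyingGraph_of_reflTransGen (h a b)

theorem List.IsChain.underlyingGraph_adj {V : Type*} {E : V → V → Prop} {l : List V}
    (h : l.IsChain E) (hl : l.Nodup) : l.IsChain (underlyingGraph E).Adj := by
  rw [isChain_iff_getElem] at h ⊢
  exact fun i hi => ⟨fun heq => by simp [hl.getElem_inj_iff] at heq, .inl (h i hi)⟩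

theorem SimpleGraph.preconnected_induce_of_isChain_adj {V : Type*} {G : SimpleGraph V}
    {l : List V} (h : l.IsChain G.Adj) : (G.induce {v | v ∈ l}).Preconnected := by
  rcases eq_or_ne l [] with rfl | hne
  · exact fun a => (List.not_mem_nil a.2).elim
  · have := (Walk.ofSupport l hne h).connected_induce_support
    rw [Walk.support_ofSupport] at this
    exact this.preconnected

theorem stronglyBiconnected_of_isChain_append_self {V : Type*} [Nonempty V] {E : V → V → Prop}
    {c : List V} (hc : (c ++ c).IsChain E) (hnodup : c.Nodup) (hcover : ∀ v, v ∈ c) :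
    StronglyBiconnected E := by
  have hsc : StronglyConnected E := fun a b =>
    List.reflTransGen_of_isChain_append_self hc (hcover a) (hcover b)
  refine ⟨hsc, hsc.connected_underlyingGraph, fun x => not_not.mpr ?_⟩
  obtain ⟨s, t, rfl⟩ := List.append_of_mem (hcover x)
  have hchain : (t ++ s).IsChain E := hc.infix ⟨s ++ [x], x :: t, by simp⟩
  obtain ⟨hx, hrest⟩ : x ∉ t ++ s ∧ (t ++ s).Nodup := by
    simpa using List.nodup_append_comm.mp hnodup
  have hset : {v | v ≠ x} = {v | v ∈ t ++ s} := Set.ext fun v =>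
    ⟨fun (hv : v ≠ x) => by simpa [hv, or_comm] using hcover v, fun hv hvx => hx (hvx ▸ hv)⟩
  rw [hset]
  exact SimpleGraph.preconnected_induce_of_isChain_adj (hchain.underlyingGraph_adj hrest)

theorem stronglyBiconnected_restrict_of_isChain_append_self {V : Type*} {E : V → V → Prop}
    {c : List V} (hc : (c ++ c).IsChain E) (hnodup : c.Nodup) (hne : c ≠ []) :
    StronglyBiconnected fun a b : {v // v ∈ c} => E a b := by
  have : Nonempty {v // v ∈ c} := ⟨⟨c.head hne, List.head_mem hne⟩⟩
  have hattach : c.attach ++ c.attach = (c ++ c).pmap Subtype.mk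
      (fun _ h => (List.mem_append.mp h).elim id id) := (List.pmap_append _).symm
  refine stronglyBiconnected_of_isChain_append_self ?_ (List.nodup_attach.mpr hnodup)
    (List.mem_attach c)
  rw [hattach]
  exact List.isChain_pmap_of_isChain (f := Subtype.mk) (fun _ _ _ _ h => h) hc _

theorem endpoints_of_added_edge_in_common_sbc_general {V : Type*}
    (Es : V → V → Prop) (hsc : StronglyConnected Es)
    (u w : V) :
    ∃ U : Set V, u ∈ U ∧ w ∈ U ∧
      StronglyBiconnected
        (fun a b : U => Es a.1 b.1 ∨ ((a : V), (b : V)) = (u, w)) := by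
  obtain ⟨l, hchain, hlast, hnodup⟩ :=
    List.exists_isChain_cons_nodup_of_relationReflTransGen (hsc w u)
  have hcycle : (w :: l ++ w :: l).IsChain fun a b => Es a b ∨ (a, b) = (u, w) := by
    refine (hchain.imp fun _ _ => .inl).append (hchain.imp fun _ _ => .inl) ?_
    simp [List.getLast?_eq_some_getLast, hlast]
  refine ⟨{v | v ∈ w :: l}, hlast ▸ List.getLast_mem _, List.mem_cons_self, ?_⟩
  exact stronglyBiconnected_restrict_of_isChain_append_self hcycle hnodup (List.cons_ne_nil w l)

/-- If $G_s = (V, E_s)$ is strongly connected, $u ≠ w$ and $(u,w) ∉ E_s$, then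
in the graph $(V, E_s ∪ \{(u,w)\})$ the vertices $u$ and $w$ lie in a common vertex set $U$
whose induced directed subgraph is strongly biconnected. -/
theorem endpoints_of_added_edge_in_common_sbc {V : Type*} [Fintype V]
    (Es : V → V → Prop) (hsc : StronglyConnected Es)
    (u w : V) (huw : u ≠ w) (hne : ¬ Es u w) :
    ∃ U : Set V, u ∈ U ∧ w ∈ U ∧
      StronglyBiconnected
        (fun a b : U => Es a.1 b.1 ∨ ((a : V), (b : V)) = (u, w)) :=
  endpoints_of_added_edge_in_common_sbc_general Es hsc u w
end

section
/- There exists a strongly biconnected directed graph G = (V,E) and an edge e ∈ E such that e is a b-bridge of G but not a strong bridge of G; that is, the subgraph (V, E∖{e}) is strongly connected but not strongly biconnected. -/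
/-!
The two directed triangles `0 → 1 → 2 → 0` and `2 → 3 → 4 → 2`, glued at `2`, form a strongly
connected digraph whose underlying graph has the articulation point `2`. Adding the chord
`1 → 3` destroys that articulation point without creating another one, so the chord is a
b-bridge; it is not a strong bridge because the glued triangles are already strongly connected.
-/

open Relation

namespace StronglyConnected

variable {V : Type*} {E F : V → V → Prop}

theorem of_hub (v : V) (hto : ∀ u, ReflTransGen E u v) (hfrom : ∀ u, ReflTransGen E v u) :
    StronglyConnected E :=
  fun a b => (hto a).trans (hfrom b)

theorem mono (hEF : ∀ a b, E a b → F a b) (hE : StronglyConnected E) : StronglyConnected F :=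
  fun a b => ReflTransGen.mono hEF a b (hE a b)

end StronglyConnected

theorem not_stronglyBiconnected_of_isArticulationPoint {V : Type*} {E : V → V → Prop} (w : V)
    (hw : IsArticulationPoint (underlyingGraph E) w) : ¬ StronglyBiconnected E :=
  fun h => h.2.2 w hw

instance underlyingGraph.instDecidableRelAdj {V : Type*} [DecidableEq V] (E : V → V → Prop)
    [DecidableRel E] : DecidableRel (underlyingGraph E).Adj :=
  fun a b => inferInstanceAs (Decidable (a ≠ b ∧ (E a b ∨ E b a)))

def bowtie (a b : Fin 5) : Prop :=
  (a, b) ∈ [(0, 1), (1, 2), (2, 0), (2, 3), (3, 4), (4, 2)]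

instance : DecidableRel bowtie := fun _ _ => inferInstanceAs (Decidable (_ ∈ _))

def bowtieWithChord (a b : Fin 5) : Prop :=
  bowtie a b ∨ (a, b) = (1, 3)

instance : DecidableRel bowtieWithChord := fun _ _ => inferInstanceAs (Decidable (_ ∨ _))

theorem bowtieWithChord_erase_chord :
    (fun a b => bowtieWithChord a b ∧ (a, b) ≠ (1, 3)) = bowtie := by
  funext a b
  revert a b
  decide

theorem stronglyConnected_bowtie : StronglyConnected bowtie := by
  refine .of_hub 2 (fun u => ?_) (fun u => ?_) <;> fin_cases u
  · exact .head (by decide : bowtie 0 1) (.single (by decide))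
  · exact .single (by decide)
  · exact .refl
  · exact .head (by decide : bowtie 3 4) (.single (by decide))
  · exact .single (by decide)
  · exact .single (by decide)
  · exact .head (by decide : bowtie 2 0) (.single (by decide))
  · exact .refl
  · exact .single (by decide)
  · exact .head (by decide : bowtie 2 3) (.single (by decide))

theorem isArticulationPoint_bowtie_two : IsArticulationPoint (underlyingGraph bowtie) 2 := by
  unfold IsArticulationPoint SimpleGraph.Preconnected
  decide +kernel

theorem biconnected_underlyingGraph_bowtieWithChord :
    Biconnected (underlyingGraph bowtieWithChord) := by
  refine ⟨⟨by unfold SimpleGraph.Preconnected; decide +kernel⟩, fun w => ?_⟩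
  unfold IsArticulationPoint SimpleGraph.Preconnected
  fin_cases w <;> decide +kernel

/-- There is a strongly biconnected directed graph with an edge that is a
b-bridge but not a strong bridge: its removal leaves the graph strongly connected but
not strongly biconnected. -/
theorem exists_b_bridge_not_strong_bridge :
    ∃ (V : Type) (_ : Fintype V) (E : V → V → Prop) (e : V × V),
      E e.1 e.2 ∧ StronglyBiconnected E ∧
      StronglyConnected (fun a b => E a b ∧ (a, b) ≠ e) ∧
      ¬ StronglyBiconnected (fun a b => E a b ∧ (a, b) ≠ e) := by
  refine ⟨Fin 5, inferInstance, bowtieWithChord, (1, 3), Or.inr rfl, ?_, ?_, ?_⟩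
  · exact ⟨stronglyConnected_bowtie.mono fun _ _ => Or.inl,
      biconnected_underlyingGraph_bowtieWithChord⟩
  · rw [bowtieWithChord_erase_chord]
    exact stronglyConnected_bowtie
  · rw [bowtieWithChord_erase_chord]
    exact not_stronglyBiconnected_of_isArticulationPoint 2 isArticulationPoint_bowtie_two
end
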